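/- arXiv:2410.14227 — 3 statements merged into one kernel-verified Lean document; each statement's English description precedes it below -/
import Mathlib

section
/- Every Morse sequence on a finite simplicial complex admits a unique reference map and a unique coreference map. That is, for every Morse sequence W on K there is exactly one frame ∧ on W satisfying ∧(ν) = ν for every critical face ν, and ∧(τ) = 0 and ∧(∂(τ)) = 0 for every upper regular face τ; and exactly one frame ∨ on W satisfying ∨(ν) = ν for every critical face ν, and ∨(σ) = 0 and ∨(δ(σ)) = 0 for every lower regular face σ. -/
/-! ## Basic notions: simplicial complexes, collapses, expansions, fillings -/

variable {V : Type*} [DecidableEq V]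

/-- A (finite) simplicial complex: a finite collection of nonempty finite sets that is
closed under taking nonempty subsets. -/
def IsComplex (K : Finset (Finset V)) : Prop :=
  ∀ τ ∈ K, τ.Nonempty ∧ ∀ σ, σ ⊆ τ → σ.Nonempty → σ ∈ K

/-- `ν` is a facet (inclusion-maximal face) of `K`. -/
def IsFacet (K : Finset (Finset V)) (ν : Finset V) : Prop :=
  ν ∈ K ∧ ∀ ρ ∈ K, ν ⊆ ρ → ρ = ν

/-- `(σ, τ)` is a free pair for `K`: `σ ⊊ τ` and `τ` is the only face of `K`
strictly containing `σ`. -/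
def IsFreePair (K : Finset (Finset V)) (σ τ : Finset V) : Prop :=
  σ ∈ K ∧ τ ∈ K ∧ σ ⊂ τ ∧ ∀ ρ ∈ K, σ ⊂ ρ → ρ = τ

/-- `K` is an elementary expansion of `L` (equivalently, `L` is an elementary collapse
of `K`): `L = K \ {σ, τ}` for some free pair `(σ, τ)` of `K`. -/
def ElemExpansion (L K : Finset (Finset V)) : Prop :=
  ∃ σ τ, IsFreePair K σ τ ∧ L = K \ {σ, τ}

/-- `K` is an elementary filling of `L` (equivalently, `L` is an elementary perforation
of `K`): `L = K \ {ν}` for some facet `ν` of `K`. -/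
def ElemFilling (L K : Finset (Finset V)) : Prop :=
  ∃ ν, IsFacet K ν ∧ L = K \ {ν}

/-- `L` is an elementary collapse of `K`. -/
def ElemCollapse (K L : Finset (Finset V)) : Prop :=
  ∃ σ τ, IsFreePair K σ τ ∧ L = K \ {σ, τ}

/-- `K` collapses onto `L`: there is a sequence of elementary collapses from `K` to `L`. -/
def CollapsesOnto (K L : Finset (Finset V)) : Prop :=
  Relation.ReflTransGen ElemCollapse K L

/-! ## Morse sequences -/

/-- A Morse sequence `⟨∅ = K₀, …, K_k = K⟩`: each `K_i` is a simplicial complex that is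
an elementary expansion or an elementary filling of `K_{i-1}`. -/
structure MorseSeq (V : Type*) [DecidableEq V] where
  k : ℕ
  seq : ℕ → Finset (Finset V)
  cpx : ∀ i ≤ k, IsComplex (seq i)
  init : seq 0 = ∅
  step : ∀ i, 1 ≤ i → i ≤ k → ElemExpansion (seq (i - 1)) (seq i) ∨ ElemFilling (seq (i - 1)) (seq i)

/-- The simplicial complex `K = K_k` on which the Morse sequence lives. -/
def MorseSeq.cplx (W : MorseSeq V) : Finset (Finset V) := W.seq W.k

/-- A face added by a filling step: a critical face of `W`. -/
def MorseSeq.Critical (W : MorseSeq V) (ν : Finset V) : Prop :=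
  ∃ i, 1 ≤ i ∧ i ≤ W.k ∧ W.seq i \ W.seq (i - 1) = {ν}

/-- `(σ, τ)` is a regular pair for `W`: the two faces are added together by an
elementary expansion step. -/
def MorseSeq.Regular (W : MorseSeq V) (σ τ : Finset V) : Prop :=
  ∃ i, 1 ≤ i ∧ i ≤ W.k ∧ σ ⊂ τ ∧ W.seq i \ W.seq (i - 1) = {σ, τ}

/-- `σ` is lower regular for `W`. -/
def MorseSeq.LowerRegular (W : MorseSeq V) (σ : Finset V) : Prop := ∃ τ, W.Regular σ τ

/-- `τ` is upper regular for `W`. -/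
def MorseSeq.UpperRegular (W : MorseSeq V) (τ : Finset V) : Prop := ∃ σ, W.Regular σ τ

/-! ## Chains modulo 2 -/

/-- The boundary `∂(σ)` of a simplex: the chain of its (nonempty) codimension-one faces. -/
def bd (σ : Finset V) : Finset (Finset V) :=
  σ.powerset.filter fun ρ => ρ.Nonempty ∧ ρ.card + 1 = σ.card

/-- The coboundary `δ(σ)` of a simplex in `K`: the chain of faces of `K` of
codimension one over `σ` containing `σ`. -/
def cobd (K : Finset (Finset V)) (σ : Finset V) : Finset (Finset V) :=
  K.filter fun τ => σ ⊆ τ ∧ σ.card + 1 = τ.card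

/-- Mod-2 linear extension: `chainSum c f` is the sum (symmetric difference) of
the chains `f σ` over `σ ∈ c`; an element belongs to it iff it belongs to an odd
number of the `f σ`. -/
def chainSum (c : Finset (Finset V)) (f : Finset V → Finset (Finset V)) : Finset (Finset V) :=
  (c.biUnion f).filter fun ν => (c.filter fun σ => ν ∈ f σ).card % 2 = 1

/-- `c` is a `p`-chain of `K`: a set of `p`-simplices of `K`. -/
def IsChainOf (K : Finset (Finset V)) (p : ℕ) (c : Finset (Finset V)) : Prop :=
  ∀ ν ∈ c, ν ∈ K ∧ ν.card = p + 1

/-- `c` is a chain of critical `p`-simplices of `W` (an element of `Ŵ[p]`). -/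
def IsCritChain (W : MorseSeq V) (p : ℕ) (c : Finset (Finset V)) : Prop :=
  ∀ ν ∈ c, W.Critical ν ∧ ν.card = p + 1

/-! ## Frames, reference and coreference maps -/

/-- A frame on `W`: it assigns to each `p`-simplex of `K` a chain of critical
`p`-simplices of `W`. -/
def IsFrame (W : MorseSeq V) (Υ : Finset V → Finset (Finset V)) : Prop :=
  ∀ ν ∈ W.cplx, ∀ μ ∈ Υ ν, W.Critical μ ∧ μ.card = ν.card

/-- `Λ` is the reference map of `W`: a frame with `Λ(ν) = ν` for critical `ν`, and
`Λ(τ) = 0`, `Λ(∂τ) = 0` for upper regular `τ`. -/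
def IsRefMap (W : MorseSeq V) (Λ : Finset V → Finset (Finset V)) : Prop :=
  IsFrame W Λ ∧ (∀ ν, W.Critical ν → Λ ν = {ν}) ∧
    ∀ τ, W.UpperRegular τ → Λ τ = ∅ ∧ chainSum (bd τ) Λ = ∅

/-- `Λ` is the coreference map of `W`: a frame with `Λ(ν) = ν` for critical `ν`, and
`Λ(σ) = 0`, `Λ(δσ) = 0` for lower regular `σ`. -/
def IsCorefMap (W : MorseSeq V) (Λ : Finset V → Finset (Finset V)) : Prop :=
  IsFrame W Λ ∧ (∀ ν, W.Critical ν → Λ ν = {ν}) ∧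
    ∀ σ, W.LowerRegular σ → Λ σ = ∅ ∧ chainSum (cobd W.cplx σ) Λ = ∅

/-- The extension map `∧̃` of `W` (defined from the coreference map `Vee`):
`∧̃(κ) = {ν ∈ K | κ ∈ ∨(ν)}`. -/
def extMap (W : MorseSeq V) (Vee : Finset V → Finset (Finset V)) (κ : Finset V) :
    Finset (Finset V) :=
  W.cplx.filter fun ν => κ ∈ Vee ν

/-- The coextension map `∨̃` of `W` (defined from the reference map `Λ`):
`∨̃(κ) = {ν ∈ K | κ ∈ ∧(ν)}`. -/
def coextMap (W : MorseSeq V) (Λ : Finset V → Finset (Finset V)) (κ : Finset V) :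
    Finset (Finset V) :=
  W.cplx.filter fun ν => κ ∈ Λ ν
section MorseAux
variable {V : Type*} [DecidableEq V]

lemma mem_chainSum {c : Finset (Finset V)} {f : Finset V → Finset (Finset V)} {ν : Finset V} :
    ν ∈ chainSum c f ↔ (c.filter fun σ => ν ∈ f σ).card % 2 = 1 := by
  unfold chainSum
  simp only [Finset.mem_filter, Finset.mem_biUnion]
  constructor
  · rintro ⟨_, h⟩; exact h
  · intro h
    refine ⟨?_, h⟩
    have hne : (c.filter fun σ => ν ∈ f σ).Nonempty := by
      rw [← Finset.card_pos]; omega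
    obtain ⟨σ, hσ⟩ := hne
    rw [Finset.mem_filter] at hσ
    exact ⟨σ, hσ.1, hσ.2⟩

lemma exists_of_mem_chainSum {c : Finset (Finset V)} {f : Finset V → Finset (Finset V)}
    {ν : Finset V} (h : ν ∈ chainSum c f) : ∃ σ ∈ c, ν ∈ f σ := by
  rw [mem_chainSum] at h
  have hne : (c.filter fun σ => ν ∈ f σ).Nonempty := by
    rw [← Finset.card_pos]; omega
  obtain ⟨σ, hσ⟩ := hne
  rw [Finset.mem_filter] at hσ
  exact ⟨σ, hσ.1, hσ.2⟩

lemma chainSum_congr {c : Finset (Finset V)} {f g : Finset V → Finset (Finset V)}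
    (h : ∀ σ ∈ c, f σ = g σ) : chainSum c f = chainSum c g := by
  ext ν
  rw [mem_chainSum, mem_chainSum]
  have he : c.filter (fun σ => ν ∈ f σ) = c.filter (fun σ => ν ∈ g σ) :=
    Finset.filter_congr fun σ hσ => by rw [h σ hσ]
  rw [he]

lemma count_split {c : Finset (Finset V)} {σ : Finset V} (hσ : σ ∈ c)
    (P : Finset V → Prop) [DecidablePred P] :
    (c.filter P).card = ((c.erase σ).filter P).card + if P σ then 1 else 0 := by
  conv_lhs => rw [← Finset.insert_erase hσ]
  rw [Finset.filter_insert]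
  split
  · rw [Finset.card_insert_of_notMem (by simp)]
  · simp

lemma chainSum_empty_iff {c : Finset (Finset V)} {f : Finset V → Finset (Finset V)}
    {σ : Finset V} (hσ : σ ∈ c) :
    chainSum c f = ∅ ↔ f σ = chainSum (c.erase σ) f := by
  rw [Finset.eq_empty_iff_forall_notMem, Finset.ext_iff]
  apply forall_congr'
  intro ν
  rw [mem_chainSum, mem_chainSum, count_split hσ (fun τ => ν ∈ f τ)]
  by_cases h : ν ∈ f σ <;> simp [h] <;> omega

lemma mem_bd {τ ρ : Finset V} :
    ρ ∈ bd τ ↔ ρ ⊆ τ ∧ ρ.Nonempty ∧ ρ.card + 1 = τ.card := by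
  unfold bd; simp [Finset.mem_filter, and_assoc]

lemma mem_cobd {K : Finset (Finset V)} {σ ρ : Finset V} :
    ρ ∈ cobd K σ ↔ ρ ∈ K ∧ σ ⊆ ρ ∧ σ.card + 1 = ρ.card := by
  unfold cobd; simp [Finset.mem_filter, and_assoc]

lemma freePair_card {K : Finset (Finset V)} {σ τ : Finset V} (hK : IsComplex K)
    (h : IsFreePair K σ τ) : τ.card = σ.card + 1 := by
  obtain ⟨hσ, hτ, hst, huniq⟩ := h
  obtain ⟨x, hxτ, hxσ⟩ := Finset.exists_of_ssubset hst
  have hρK : insert x σ ∈ K :=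
    (hK τ hτ).2 (insert x σ) (Finset.insert_subset hxτ hst.subset) ⟨x, Finset.mem_insert_self x σ⟩
  have he : insert x σ = τ := huniq _ hρK (Finset.ssubset_insert hxσ)
  rw [← he, Finset.card_insert_of_notMem hxσ]

lemma pair_eq {σ τ σ' τ' : Finset V} (h1 : σ ⊂ τ) (h2 : σ' ⊂ τ')
    (h : ({σ, τ} : Finset (Finset V)) = {σ', τ'}) : σ = σ' ∧ τ = τ' := by
  have hσ : σ = σ' ∨ σ = τ' := by
    have : σ ∈ ({σ', τ'} : Finset (Finset V)) := h ▸ (by simp)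
    simpa using this
  have hτ : τ = σ' ∨ τ = τ' := by
    have : τ ∈ ({σ', τ'} : Finset (Finset V)) := h ▸ (by simp)
    simpa using this
  have hσ'' : σ' = σ ∨ σ' = τ := by
    have : σ' ∈ ({σ, τ} : Finset (Finset V)) := h ▸ (by simp)
    simpa using this
  have c1 := Finset.card_lt_card h1
  have c2 := Finset.card_lt_card h2
  rcases hσ with h3 | h3
  · refine ⟨h3, ?_⟩
    rcases hτ with h4 | h4
    · exfalso; rw [h3, h4] at c1; omega
    · exact h4
  · exfalso
    rcases hσ'' with h4 | h4
    · rw [h4, h3] at c2; omega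
    · rw [h3] at c1; rw [h4] at c2; omega
end MorseAux
section MorseAux2
variable {V : Type*} [DecidableEq V]

lemma seq_subset_succ (W : MorseSeq V) {i : ℕ} (h1 : 1 ≤ i) (h2 : i ≤ W.k) :
    W.seq (i - 1) ⊆ W.seq i := by
  rcases W.step i h1 h2 with ⟨σ, τ, _, hL⟩ | ⟨ν, _, hL⟩ <;> rw [hL] <;> exact Finset.sdiff_subset

lemma seq_mono (W : MorseSeq V) {i j : ℕ} (hij : i ≤ j) (hj : j ≤ W.k) :
    W.seq i ⊆ W.seq j := by
  induction j with
  | zero => rw [Nat.le_zero.mp hij]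
  | succ n ih =>
    rcases Nat.lt_or_ge i (n + 1) with h | h
    · have hsub : W.seq n ⊆ W.seq (n + 1) := by
        have := seq_subset_succ W (i := n + 1) (by omega) hj
        simpa using this
      exact (ih (by omega) (by omega)).trans hsub
    · have he : i = n + 1 := by omega
      rw [he]

lemma step_cases (W : MorseSeq V) {i : ℕ} (h1 : 1 ≤ i) (h2 : i ≤ W.k) :
    (∃ ν, ν ∈ W.seq i ∧ ν ∉ W.seq (i - 1) ∧ IsFacet (W.seq i) ν ∧
      W.seq i \ W.seq (i - 1) = {ν}) ∨
    (∃ σ τ, σ ∈ W.seq i ∧ τ ∈ W.seq i ∧ σ ∉ W.seq (i - 1) ∧ τ ∉ W.seq (i - 1) ∧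
      IsFreePair (W.seq i) σ τ ∧ W.seq i \ W.seq (i - 1) = {σ, τ}) := by
  rcases W.step i h1 h2 with ⟨σ, τ, hfp, hL⟩ | ⟨ν, hfc, hL⟩
  · right
    obtain ⟨hσ, hτ, hst, hu⟩ := hfp
    have hfp : IsFreePair (W.seq i) σ τ := ⟨hσ, hτ, hst, hu⟩
    have hsub : ({σ, τ} : Finset (Finset V)) ⊆ W.seq i := by
      intro x hx; simp only [Finset.mem_insert, Finset.mem_singleton] at hx
      rcases hx with rfl | rfl <;> assumption
    have hdiff : W.seq i \ W.seq (i - 1) = {σ, τ} := by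
      rw [hL, sdiff_sdiff_eq_self hsub]
    refine ⟨σ, τ, hσ, hτ, ?_, ?_, hfp, hdiff⟩
    · rw [hL]; simp
    · rw [hL]; simp
  · left
    obtain ⟨hν, hu⟩ := hfc
    have hfc : IsFacet (W.seq i) ν := ⟨hν, hu⟩
    have hsub : ({ν} : Finset (Finset V)) ⊆ W.seq i := by simpa using hν
    have hdiff : W.seq i \ W.seq (i - 1) = {ν} := by
      rw [hL, sdiff_sdiff_eq_self hsub]
    refine ⟨ν, hν, ?_, hfc, hdiff⟩
    rw [hL]; simp

lemma mem_prev_of_not_diff (W : MorseSeq V) {i : ℕ} (h1 : 1 ≤ i) (h2 : i ≤ W.k)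
    {ν : Finset V} (hν : ν ∈ W.seq i) (hnd : ν ∉ W.seq i \ W.seq (i - 1)) :
    ν ∈ W.seq (i - 1) := by
  by_contra h
  exact hnd (Finset.mem_sdiff.mpr ⟨hν, h⟩)

/-- Faces of `bd τ` other than `σ` live in the previous complex, for a free pair `(σ,τ)`
added at step `i`. -/
lemma bd_mem_prev (W : MorseSeq V) {i : ℕ} (h1 : 1 ≤ i) (h2 : i ≤ W.k)
    {σ τ : Finset V} (hfp : IsFreePair (W.seq i) σ τ)
    (hdiff : W.seq i \ W.seq (i - 1) = {σ, τ}) :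
    ∀ ρ ∈ bd τ, ρ ≠ σ → ρ ∈ W.seq (i - 1) := by
  intro ρ hρ hρσ
  rw [mem_bd] at hρ
  obtain ⟨hsub, hne, hcard⟩ := hρ
  have hρi : ρ ∈ W.seq i := (W.cpx i h2 τ hfp.2.1).2 ρ hsub hne
  have hρτ : ρ ≠ τ := by intro h; rw [h] at hcard; omega
  apply mem_prev_of_not_diff W h1 h2 hρi
  rw [hdiff]
  simp [hρσ, hρτ]

/-- Every element of `cobd K σ` other than `τ` is not yet present at step `i`,
for a free pair `(σ,τ)` at step `i`; and none is present at step `i-1`. -/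
lemma cobd_not_in_seq (W : MorseSeq V) {i : ℕ} (h1 : 1 ≤ i) (h2 : i ≤ W.k)
    {σ τ : Finset V} (hfp : IsFreePair (W.seq i) σ τ) (hτp : τ ∉ W.seq (i - 1)) :
    ∀ ρ ∈ cobd W.cplx σ, (ρ ≠ τ → ρ ∉ W.seq i) ∧ ρ ∉ W.seq (i - 1) := by
  intro ρ hρ
  rw [mem_cobd] at hρ
  obtain ⟨hρK, hsub, hcard⟩ := hρ
  have hss : σ ⊂ ρ := by
    refine Finset.ssubset_iff_subset_ne.mpr ⟨hsub, ?_⟩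
    intro h; rw [h] at hcard; omega
  have key : ∀ hρi : ρ ∈ W.seq i, ρ = τ := fun hρi => hfp.2.2.2 ρ hρi hss
  constructor
  · intro hne hρi; exact hne (key hρi)
  · intro hρp
    have hρi : ρ ∈ W.seq i := seq_subset_succ W h1 h2 hρp
    have := key hρi
    subst this
    exact hτp hρp

lemma bd_subset (W : MorseSeq V) {j : ℕ} (hj : j ≤ W.k) {τ : Finset V}
    (hτ : τ ∈ W.seq j) : ∀ ρ ∈ bd τ, ρ ∈ W.seq j := by
  intro ρ hρ
  rw [mem_bd] at hρ
  exact (W.cpx j hj τ hτ).2 ρ hρ.1 hρ.2.1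

end MorseAux2
section RefMap
variable {V : Type*} [DecidableEq V]

/-- Invariant for the construction of the reference map up to step `i`. -/
def RefUpTo (W : MorseSeq V) (i : ℕ) (f : Finset V → Finset (Finset V)) : Prop :=
  (∀ ν ∈ W.seq i, ∀ μ ∈ f ν, W.Critical μ ∧ μ.card = ν.card) ∧
  (∀ j ν, 1 ≤ j → j ≤ i → W.seq j \ W.seq (j - 1) = {ν} → f ν = {ν}) ∧
  (∀ j σ τ, 1 ≤ j → j ≤ i → σ ⊂ τ → W.seq j \ W.seq (j - 1) = {σ, τ} →
    f τ = ∅ ∧ chainSum (bd τ) f = ∅)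

lemma refUpTo_exists (W : MorseSeq V) : ∀ i ≤ W.k, ∃ f, RefUpTo W i f := by
  intro i
  induction i with
  | zero =>
    intro _
    exact ⟨fun _ => ∅, by simp [RefUpTo, W.init], by omega, by omega⟩
  | succ n ih =>
    intro hn1
    obtain ⟨f, hfr, hcrit, hreg⟩ := ih (by omega)
    have h1 : 1 ≤ n + 1 := by omega
    have hns : n + 1 - 1 = n := by omega
    -- faces constrained at steps ≤ n lie in seq n
    have hcrit_mem : ∀ j ν, 1 ≤ j → j ≤ n → W.seq j \ W.seq (j - 1) = {ν} →
        ν ∈ W.seq n := by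
      intro j ν hj1 hjn hd
      have : ν ∈ W.seq j \ W.seq (j - 1) := by rw [hd]; simp
      exact seq_mono W hjn (by omega) (Finset.mem_sdiff.mp this).1
    have hreg_mem : ∀ j σ τ, 1 ≤ j → j ≤ n → W.seq j \ W.seq (j - 1) = {σ, τ} →
        τ ∈ W.seq n ∧ ∀ ρ ∈ bd τ, ρ ∈ W.seq n := by
      intro j σ τ hj1 hjn hd
      have hτj : τ ∈ W.seq j := by
        have : τ ∈ W.seq j \ W.seq (j - 1) := by rw [hd]; simp
        exact (Finset.mem_sdiff.mp this).1
      refine ⟨seq_mono W hjn (by omega) hτj, fun ρ hρ => ?_⟩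
      exact seq_mono W hjn (by omega) (bd_subset W (by omega) hτj ρ hρ)
    rcases step_cases W h1 hn1 with
      ⟨ν, hνi, hνp, hfc, hdiff⟩ | ⟨σ, τ, hσi, hτi, hσp, hτp, hfp, hdiff⟩
    · -- filling step
      rw [hns] at hνp hdiff
      refine ⟨Function.update f ν {ν}, ?_, ?_, ?_⟩
      · intro ν' hν' μ hμ
        by_cases hne : ν' = ν
        · subst hne
          rw [Function.update_self] at hμ
          rw [Finset.mem_singleton] at hμ
          subst hμ
          exact ⟨⟨n + 1, h1, hn1, by rw [hns]; exact hdiff⟩, rfl⟩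
        · rw [Function.update_of_ne hne] at hμ
          have : ν' ∈ W.seq n := by
            apply mem_prev_of_not_diff W h1 hn1 hν'
            rw [hns, hdiff]; simpa using hne
          exact hfr ν' this μ hμ
      · intro j ν' hj1 hj2 hd
        by_cases hj : j ≤ n
        · have hm := hcrit_mem j ν' hj1 hj hd
          rw [Function.update_of_ne (by rintro rfl; exact hνp hm)]
          exact hcrit j ν' hj1 hj hd
        · have : j = n + 1 := by omega
          subst this
          rw [hns, hdiff] at hd
          have : ν = ν' := by simpa using congrArg (ν ∈ ·) hd
          subst this
          rw [Function.update_self]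
      · intro j σ' τ' hj1 hj2 hss hd
        by_cases hj : j ≤ n
        · obtain ⟨hτm, hbdm⟩ := hreg_mem j σ' τ' hj1 hj hd
          constructor
          · rw [Function.update_of_ne (by rintro rfl; exact hνp hτm)]
            exact (hreg j σ' τ' hj1 hj hss hd).1
          · have hcc : chainSum (bd τ') (Function.update f ν {ν}) = chainSum (bd τ') f := by
              apply chainSum_congr
              intro ρ hρ
              have hne : ρ ≠ ν := by rintro rfl; exact hνp (hbdm ρ hρ)
              rw [Function.update_of_ne hne]
            rw [hcc]
            exact (hreg j σ' τ' hj1 hj hss hd).2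
        · have : j = n + 1 := by omega
          subst this
          rw [hns, hdiff] at hd
          exfalso
          have := congrArg Finset.card hd
          rw [Finset.card_singleton, Finset.card_insert_of_notMem
            (by simpa using hss.ne), Finset.card_singleton] at this
          omega
    · -- expansion step
      rw [hns] at hσp hτp hdiff
      have hστ : σ ≠ τ := hfp.2.2.1.ne
      have hcard : τ.card = σ.card + 1 := freePair_card (W.cpx (n+1) hn1) hfp
      have hσbd : σ ∈ bd τ := by
        rw [mem_bd]
        exact ⟨hfp.2.2.1.subset, (W.cpx (n+1) hn1 σ hσi).1, by omega⟩
      -- the new value at σ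
      set v := chainSum ((bd τ).erase σ) f with hv
      set f' := Function.update (Function.update f τ ∅) σ v with hf'
      have hf'σ : f' σ = v := by rw [hf', Function.update_self]
      have hf'τ : f' τ = ∅ := by
        rw [hf', Function.update_of_ne (Ne.symm hστ), Function.update_self]
      have hf'other : ∀ ρ, ρ ≠ σ → ρ ≠ τ → f' ρ = f ρ := by
        intro ρ h1' h2'
        rw [hf', Function.update_of_ne h1', Function.update_of_ne h2']
      have hf'prev : ∀ ρ ∈ W.seq n, f' ρ = f ρ := by
        intro ρ hρ
        exact hf'other ρ (by rintro rfl; exact hσp hρ) (by rintro rfl; exact hτp hρ)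
      have hbd_prev : ∀ ρ ∈ (bd τ).erase σ, ρ ∈ W.seq n := by
        intro ρ hρ
        rw [Finset.mem_erase] at hρ
        have := bd_mem_prev W h1 hn1 hfp (by rw [hns]; exact hdiff) ρ hρ.2 hρ.1
        rwa [hns] at this
      refine ⟨f', ?_, ?_, ?_⟩
      · intro ν' hν' μ hμ
        by_cases he1 : ν' = σ
        · subst he1
          rw [hf'σ, hv] at hμ
          obtain ⟨ρ, hρ, hμρ⟩ := exists_of_mem_chainSum hμ
          have hρn := hbd_prev ρ hρ
          obtain ⟨hc, hcd⟩ := hfr ρ hρn μ hμρ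
          rw [Finset.mem_erase, mem_bd] at hρ
          exact ⟨hc, by omega⟩
        · by_cases he2 : ν' = τ
          · subst he2; rw [hf'τ] at hμ; simp at hμ
          · rw [hf'other ν' he1 he2] at hμ
            have : ν' ∈ W.seq n := by
              apply mem_prev_of_not_diff W h1 hn1 hν'
              rw [hns, hdiff]; simpa using ⟨he1, he2⟩
            exact hfr ν' this μ hμ
      · intro j ν' hj1 hj2 hd
        by_cases hj : j ≤ n
        · have hm := hcrit_mem j ν' hj1 hj hd
          rw [hf'prev ν' hm]
          exact hcrit j ν' hj1 hj hd
        · have : j = n + 1 := by omega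
          subst this
          rw [hns, hdiff] at hd
          exfalso
          have := congrArg Finset.card hd
          rw [Finset.card_singleton, Finset.card_insert_of_notMem
            (by simpa using hστ), Finset.card_singleton] at this
          omega
      · intro j σ' τ' hj1 hj2 hss hd
        by_cases hj : j ≤ n
        · obtain ⟨hτm, hbdm⟩ := hreg_mem j σ' τ' hj1 hj hd
          constructor
          · rw [hf'prev τ' hτm]
            exact (hreg j σ' τ' hj1 hj hss hd).1
          · rw [chainSum_congr (g := f) (fun ρ hρ => hf'prev ρ (hbdm ρ hρ))]
            exact (hreg j σ' τ' hj1 hj hss hd).2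
        · have : j = n + 1 := by omega
          subst this
          rw [hns, hdiff] at hd
          obtain ⟨he1, he2⟩ := pair_eq hfp.2.2.1 hss hd
          subst he1; subst he2
          refine ⟨hf'τ, ?_⟩
          rw [chainSum_empty_iff hσbd, hf'σ, hv]
          exact chainSum_congr (fun ρ hρ => (hf'prev ρ (hbd_prev ρ hρ)).symm)

lemma refMap_exists (W : MorseSeq V) : ∃ Λ, IsRefMap W Λ := by
  obtain ⟨f, hfr, hcrit, hreg⟩ := refUpTo_exists W W.k le_rfl
  refine ⟨f, hfr, ?_, ?_⟩
  · rintro ν ⟨j, hj1, hj2, hd⟩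
    exact hcrit j ν hj1 hj2 hd
  · rintro τ ⟨σ, j, hj1, hj2, hss, hd⟩
    exact hreg j σ τ hj1 hj2 hss hd

lemma refMap_unique (W : MorseSeq V) {Λ Λ' : Finset V → Finset (Finset V)}
    (h : IsRefMap W Λ) (h' : IsRefMap W Λ') :
    ∀ i ≤ W.k, ∀ ν ∈ W.seq i, Λ' ν = Λ ν := by
  intro i
  induction i with
  | zero => intro _ ν hν; rw [W.init] at hν; simp at hν
  | succ n ih =>
    intro hn1 ν hν
    have h1 : 1 ≤ n + 1 := by omega
    have hns : n + 1 - 1 = n := by omega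
    by_cases hp : ν ∈ W.seq n
    · exact ih (by omega) ν hp
    · have hνd : ν ∈ W.seq (n + 1) \ W.seq n := Finset.mem_sdiff.mpr ⟨hν, hp⟩
      rcases step_cases W h1 hn1 with
        ⟨ν', hνi, hνp, hfc, hdiff⟩ | ⟨σ, τ, hσi, hτi, hσp, hτp, hfp, hdiff⟩
      · rw [hns] at hdiff
        rw [hdiff] at hνd
        rw [Finset.mem_singleton] at hνd
        subst hνd
        have hc : W.Critical ν := ⟨n + 1, h1, hn1, by rw [hns]; exact hdiff⟩
        rw [h.2.1 ν hc, h'.2.1 ν hc]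
      · rw [hns] at hdiff
        rw [hdiff] at hνd
        have hur : W.UpperRegular τ :=
          ⟨σ, n + 1, h1, hn1, hfp.2.2.1, by rw [hns]; exact hdiff⟩
        simp only [Finset.mem_insert, Finset.mem_singleton] at hνd
        rcases hνd with rfl | rfl
        · -- ν = σ : lower regular
          have hcard : τ.card = ν.card + 1 := freePair_card (W.cpx (n+1) hn1) hfp
          have hσbd : ν ∈ bd τ := by
            rw [mem_bd]
            exact ⟨hfp.2.2.1.subset, (W.cpx (n+1) hn1 ν hσi).1, by omega⟩
          have e1 : Λ' ν = chainSum ((bd τ).erase ν) Λ' :=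
            (chainSum_empty_iff hσbd).mp (h'.2.2 τ hur).2
          have e2 : Λ ν = chainSum ((bd τ).erase ν) Λ :=
            (chainSum_empty_iff hσbd).mp (h.2.2 τ hur).2
          rw [e1, e2]
          apply chainSum_congr
          intro ρ hρ
          rw [Finset.mem_erase] at hρ
          have hρn : ρ ∈ W.seq n := by
            have := bd_mem_prev W h1 hn1 hfp (by rw [hns]; exact hdiff) ρ hρ.2 hρ.1
            rwa [hns] at this
          exact ih (by omega) ρ hρn
        · rw [(h.2.2 ν hur).1, (h'.2.2 ν hur).1]

end RefMap
section CorefMap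
variable {V : Type*} [DecidableEq V]

lemma regular_freePair (W : MorseSeq V) {j : ℕ} {σ τ : Finset V}
    (hj1 : 1 ≤ j) (hj2 : j ≤ W.k) (hss : σ ⊂ τ)
    (hd : W.seq j \ W.seq (j - 1) = {σ, τ}) :
    IsFreePair (W.seq j) σ τ ∧ σ ∉ W.seq (j - 1) ∧ τ ∉ W.seq (j - 1) := by
  rcases step_cases W hj1 hj2 with
    ⟨ν, hνi, hνp, hfc, hdiff⟩ | ⟨σ0, τ0, hσi, hτi, hσp, hτp, hfp, hdiff⟩
  · exfalso
    rw [hdiff] at hd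
    have := congrArg Finset.card hd
    rw [Finset.card_singleton, Finset.card_insert_of_notMem
      (by simpa using hss.ne), Finset.card_singleton] at this
    omega
  · rw [hdiff] at hd
    obtain ⟨he1, he2⟩ := pair_eq hfp.2.2.1 hss hd
    subst he1; subst he2
    exact ⟨hfp, hσp, hτp⟩

lemma cplx_eq (W : MorseSeq V) : W.cplx = W.seq W.k := rfl

/-- Invariant for the backward construction of the coreference map: `g` is correct on
the faces added strictly after step `m`. -/
def CorefFrom (W : MorseSeq V) (m : ℕ) (g : Finset V → Finset (Finset V)) : Prop :=
  (∀ ν ∈ W.cplx, ν ∉ W.seq m → ∀ μ ∈ g ν, W.Critical μ ∧ μ.card = ν.card) ∧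
  (∀ j ν, m < j → j ≤ W.k → W.seq j \ W.seq (j - 1) = {ν} → g ν = {ν}) ∧
  (∀ j σ τ, m < j → j ≤ W.k → σ ⊂ τ → W.seq j \ W.seq (j - 1) = {σ, τ} →
    g σ = ∅ ∧ chainSum (cobd W.cplx σ) g = ∅)

lemma corefFrom_exists (W : MorseSeq V) : ∀ j ≤ W.k, ∃ g, CorefFrom W (W.k - j) g := by
  intro j
  induction j with
  | zero =>
    intro _
    refine ⟨fun _ => ∅, ?_, by omega, by omega⟩
    intro ν hν hν'
    rw [Nat.sub_zero] at hν'
    exact absurd hν hν'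
  | succ n ih =>
    intro hn1
    obtain ⟨g, hgf, hgcrit, hgreg⟩ := ih (by omega)
    set m := W.k - (n + 1) with hm
    have hmn : W.k - n = m + 1 := by omega
    rw [hmn] at hgf hgcrit hgreg
    have h1 : 1 ≤ m + 1 := by omega
    have h2 : m + 1 ≤ W.k := by omega
    have hms : m + 1 - 1 = m := by omega
    -- `g` is untouched outside `seq (m+1)`, constrained faces of later steps are outside
    have hlater : ∀ j' ν', m + 1 < j' → j' ≤ W.k → ν' ∉ W.seq (j' - 1) →
        ν' ∉ W.seq (m + 1) := by
      intro j' ν' hj' hjk hν' hmem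
      exact hν' (seq_mono W (by omega) (by omega) hmem)
    rcases step_cases W h1 h2 with
      ⟨ν, hνi, hνp, hfc, hdiff⟩ | ⟨σ, τ, hσi, hτi, hσp, hτp, hfp, hdiff⟩
    · -- filling step at m+1
      rw [hms] at hνp hdiff
      set g' := Function.update g ν {ν} with hg'
      have hg'fresh : ∀ ρ, ρ ∉ W.seq (m + 1) → g' ρ = g ρ := by
        intro ρ hρ
        rw [hg', Function.update_of_ne (by rintro rfl; exact hρ hνi)]
      refine ⟨g', ?_, ?_, ?_⟩
      · intro ν' hν' hν'm μ hμ
        by_cases hne : ν' = ν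
        · subst hne
          rw [hg', Function.update_self, Finset.mem_singleton] at hμ
          subst hμ
          exact ⟨⟨m + 1, h1, h2, by rw [hms]; exact hdiff⟩, rfl⟩
        · have hout : ν' ∉ W.seq (m + 1) := by
            intro hin
            have : ν' ∈ W.seq (m + 1) \ W.seq m := Finset.mem_sdiff.mpr ⟨hin, hν'm⟩
            rw [hdiff, Finset.mem_singleton] at this
            exact hne this
          rw [hg'fresh ν' hout] at hμ
          exact hgf ν' hν' hout μ hμ
      · intro j' ν' hj'm hj'k hd
        by_cases hj' : m + 1 < j'
        · have hν'fresh : ν' ∉ W.seq (j' - 1) := by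
            have : ν' ∈ W.seq j' \ W.seq (j' - 1) := by rw [hd]; simp
            exact (Finset.mem_sdiff.mp this).2
          rw [hg'fresh ν' (hlater j' ν' hj' hj'k hν'fresh)]
          exact hgcrit j' ν' hj' hj'k hd
        · have : j' = m + 1 := by omega
          subst this
          rw [hms, hdiff] at hd
          have : ν = ν' := by simpa using congrArg (ν ∈ ·) hd
          subst this
          rw [hg', Function.update_self]
      · intro j' σ' τ' hj'm hj'k hss hd
        by_cases hj' : m + 1 < j'
        · obtain ⟨hfp', hσ'p, hτ'p⟩ := regular_freePair W (by omega) hj'k hss hd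
          have hcobd : ∀ ρ ∈ cobd W.cplx σ', g' ρ = g ρ := by
            intro ρ hρ
            have := (cobd_not_in_seq W (by omega) hj'k hfp' hτ'p ρ hρ).2
            exact hg'fresh ρ (hlater j' ρ hj' hj'k this)
          constructor
          · rw [hg'fresh σ' (hlater j' σ' hj' hj'k hσ'p)]
            exact (hgreg j' σ' τ' hj' hj'k hss hd).1
          · rw [chainSum_congr hcobd]
            exact (hgreg j' σ' τ' hj' hj'k hss hd).2
        · have : j' = m + 1 := by omega
          subst this
          rw [hms, hdiff] at hd
          exfalso
          have := congrArg Finset.card hd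
          rw [Finset.card_singleton, Finset.card_insert_of_notMem
            (by simpa using hss.ne), Finset.card_singleton] at this
          omega
    · -- expansion step at m+1
      rw [hms] at hσp hτp hdiff
      have hστ : σ ≠ τ := hfp.2.2.1.ne
      have hcard : τ.card = σ.card + 1 := freePair_card (W.cpx (m + 1) h2) hfp
      have hτcobd : τ ∈ cobd W.cplx σ := by
        rw [mem_cobd]
        exact ⟨seq_mono W h2 le_rfl hτi, hfp.2.2.1.subset, by omega⟩
      have hfresh_cobd : ∀ ρ ∈ (cobd W.cplx σ).erase τ, ρ ∉ W.seq (m + 1) := by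
        intro ρ hρ
        rw [Finset.mem_erase] at hρ
        exact (cobd_not_in_seq W h1 h2 hfp (by rw [hms]; exact hτp) ρ hρ.2).1 hρ.1
      set v := chainSum ((cobd W.cplx σ).erase τ) g with hv
      set g' := Function.update (Function.update g σ ∅) τ v with hg'
      have hg'σ : g' σ = ∅ := by
        rw [hg', Function.update_of_ne hστ, Function.update_self]
      have hg'τ : g' τ = v := by rw [hg', Function.update_self]
      have hg'fresh : ∀ ρ, ρ ∉ W.seq (m + 1) → g' ρ = g ρ := by
        intro ρ hρ
        rw [hg', Function.update_of_ne (by rintro rfl; exact hρ hτi),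
          Function.update_of_ne (by rintro rfl; exact hρ hσi)]
      have hveq : v = chainSum ((cobd W.cplx σ).erase τ) g' := by
        rw [hv]
        exact (chainSum_congr (fun ρ hρ => hg'fresh ρ (hfresh_cobd ρ hρ))).symm
      refine ⟨g', ?_, ?_, ?_⟩
      · intro ν' hν' hν'm μ hμ
        by_cases he1 : ν' = σ
        · subst he1; rw [hg'σ] at hμ; simp at hμ
        · by_cases he2 : ν' = τ
          · subst he2
            rw [hg'τ, hv] at hμ
            obtain ⟨ρ, hρ, hμρ⟩ := exists_of_mem_chainSum hμ
            have hρm := hfresh_cobd ρ hρ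
            rw [Finset.mem_erase] at hρ
            have hρK : ρ ∈ W.cplx := (mem_cobd.mp hρ.2).1
            obtain ⟨hc, hcd⟩ := hgf ρ hρK hρm μ hμρ
            have := (mem_cobd.mp hρ.2).2.2
            exact ⟨hc, by omega⟩
          · have hout : ν' ∉ W.seq (m + 1) := by
              intro hin
              have : ν' ∈ W.seq (m + 1) \ W.seq m := Finset.mem_sdiff.mpr ⟨hin, hν'm⟩
              rw [hdiff] at this
              simp only [Finset.mem_insert, Finset.mem_singleton] at this
              tauto
            rw [hg'fresh ν' hout] at hμ
            exact hgf ν' hν' hout μ hμ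
      · intro j' ν' hj'm hj'k hd
        by_cases hj' : m + 1 < j'
        · have hν'fresh : ν' ∉ W.seq (j' - 1) := by
            have : ν' ∈ W.seq j' \ W.seq (j' - 1) := by rw [hd]; simp
            exact (Finset.mem_sdiff.mp this).2
          rw [hg'fresh ν' (hlater j' ν' hj' hj'k hν'fresh)]
          exact hgcrit j' ν' hj' hj'k hd
        · have : j' = m + 1 := by omega
          subst this
          rw [hms, hdiff] at hd
          exfalso
          have := congrArg Finset.card hd
          rw [Finset.card_singleton, Finset.card_insert_of_notMem
            (by simpa using hστ), Finset.card_singleton] at this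
          omega
      · intro j' σ' τ' hj'm hj'k hss hd
        by_cases hj' : m + 1 < j'
        · obtain ⟨hfp', hσ'p, hτ'p⟩ := regular_freePair W (by omega) hj'k hss hd
          have hcobd : ∀ ρ ∈ cobd W.cplx σ', g' ρ = g ρ := by
            intro ρ hρ
            have := (cobd_not_in_seq W (by omega) hj'k hfp' hτ'p ρ hρ).2
            exact hg'fresh ρ (hlater j' ρ hj' hj'k this)
          constructor
          · rw [hg'fresh σ' (hlater j' σ' hj' hj'k hσ'p)]
            exact (hgreg j' σ' τ' hj' hj'k hss hd).1
          · rw [chainSum_congr hcobd]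
            exact (hgreg j' σ' τ' hj' hj'k hss hd).2
        · have : j' = m + 1 := by omega
          subst this
          rw [hms, hdiff] at hd
          obtain ⟨he1, he2⟩ := pair_eq hfp.2.2.1 hss hd
          subst he1; subst he2
          refine ⟨hg'σ, ?_⟩
          rw [chainSum_empty_iff hτcobd, hg'τ]
          exact hveq

lemma corefMap_exists (W : MorseSeq V) : ∃ Λ, IsCorefMap W Λ := by
  obtain ⟨g, hgf, hgcrit, hgreg⟩ := corefFrom_exists W W.k le_rfl
  rw [Nat.sub_self] at hgf hgcrit hgreg
  refine ⟨g, ?_, ?_, ?_⟩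
  · intro ν hν μ hμ
    exact hgf ν hν (by rw [W.init]; simp) μ hμ
  · rintro ν ⟨j, hj1, hj2, hd⟩
    exact hgcrit j ν (by omega) hj2 hd
  · rintro σ ⟨τ, j, hj1, hj2, hss, hd⟩
    exact hgreg j σ τ (by omega) hj2 hss hd

lemma corefMap_unique (W : MorseSeq V) {Λ Λ' : Finset V → Finset (Finset V)}
    (h : IsCorefMap W Λ) (h' : IsCorefMap W Λ') :
    ∀ j ≤ W.k, ∀ ν ∈ W.cplx, ν ∉ W.seq (W.k - j) → Λ' ν = Λ ν := by
  intro j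
  induction j with
  | zero =>
    intro _ ν hν hν'
    rw [Nat.sub_zero] at hν'
    exact absurd hν hν'
  | succ n ih =>
    intro hn1 ν hν hνm
    set m := W.k - (n + 1) with hm
    have hmn : W.k - n = m + 1 := by omega
    have h1 : 1 ≤ m + 1 := by omega
    have h2 : m + 1 ≤ W.k := by omega
    have hms : m + 1 - 1 = m := by omega
    by_cases hp : ν ∈ W.seq (m + 1)
    · have hνd : ν ∈ W.seq (m + 1) \ W.seq m := Finset.mem_sdiff.mpr ⟨hp, hνm⟩
      rcases step_cases W h1 h2 with
        ⟨ν0, hνi, hνp, hfc, hdiff⟩ | ⟨σ, τ, hσi, hτi, hσp, hτp, hfp, hdiff⟩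
      · rw [hms] at hdiff
        rw [hdiff, Finset.mem_singleton] at hνd
        subst hνd
        have hc : W.Critical ν := ⟨m + 1, h1, h2, by rw [hms]; exact hdiff⟩
        rw [h.2.1 ν hc, h'.2.1 ν hc]
      · rw [hms] at hdiff
        rw [hdiff] at hνd
        have hlr : W.LowerRegular σ :=
          ⟨τ, m + 1, h1, h2, hfp.2.2.1, by rw [hms]; exact hdiff⟩
        simp only [Finset.mem_insert, Finset.mem_singleton] at hνd
        rcases hνd with rfl | rfl
        · rw [(h.2.2 ν hlr).1, (h'.2.2 ν hlr).1]
        · have hcard : ν.card = σ.card + 1 := freePair_card (W.cpx (m + 1) h2) hfp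
          have hτcobd : ν ∈ cobd W.cplx σ := by
            rw [mem_cobd]
            exact ⟨hν, hfp.2.2.1.subset, by omega⟩
          have e1 : Λ' ν = chainSum ((cobd W.cplx σ).erase ν) Λ' :=
            (chainSum_empty_iff hτcobd).mp (h'.2.2 σ hlr).2
          have e2 : Λ ν = chainSum ((cobd W.cplx σ).erase ν) Λ :=
            (chainSum_empty_iff hτcobd).mp (h.2.2 σ hlr).2
          rw [e1, e2]
          apply chainSum_congr
          intro ρ hρ
          rw [Finset.mem_erase] at hρ
          have hρnot : ρ ∉ W.seq (m + 1) :=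
            (cobd_not_in_seq W h1 h2 hfp (by rw [hms]; exact hτp) ρ hρ.2).1 hρ.1
          have hρK : ρ ∈ W.cplx := (mem_cobd.mp hρ.2).1
          exact ih (by omega) ρ hρK (by rw [hmn]; exact hρnot)
    · exact ih (by omega) ν hν (by rw [hmn]; exact hp)

end CorefMap

/-- Every Morse sequence admits a unique reference map and a unique
coreference map (uniqueness as maps on the faces of `K`). -/
theorem morseSeq_unique_refMap_and_corefMap (W : MorseSeq V) :
    (∃ Λ : Finset V → Finset (Finset V), IsRefMap W Λ ∧
      ∀ Λ', IsRefMap W Λ' → ∀ ν ∈ W.cplx, Λ' ν = Λ ν) ∧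
    (∃ Λ : Finset V → Finset (Finset V), IsCorefMap W Λ ∧
      ∀ Λ', IsCorefMap W Λ' → ∀ ν ∈ W.cplx, Λ' ν = Λ ν) := by
  constructor
  · obtain ⟨Λ, hΛ⟩ := refMap_exists W
    exact ⟨Λ, hΛ, fun Λ' h' ν hν => refMap_unique W hΛ h' W.k le_rfl ν hν⟩
  · obtain ⟨Λ, hΛ⟩ := corefMap_exists W
    refine ⟨Λ, hΛ, fun Λ' h' ν hν => ?_⟩
    refine corefMap_unique W hΛ h' W.k le_rfl ν hν ?_
    rw [Nat.sub_self, W.init]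
    simp
end

section
/- Let (∧,∨) be the reference pair of a Morse sequence W on K, let κ be a critical face of W and let ν be any face of K. Then (1) κ ∈ ∧(ν) if and only if the number of gradient paths in W from ν to κ is odd, and (2) κ ∈ ∨(ν) if and only if the number of cogradient paths in W from κ to ν is odd. -/
/-! ## Basic notions: simplicial complexes, collapses, expansions, fillings -/

variable {V : Type*} [DecidableEq V]

/-! ## Gradient and cogradient paths -/

/-- `IsGradPathList W l` : the list `l = [σ₀, τ₀, σ₁, τ₁, …, σ_k]` is a gradient path
in `W`. -/
inductive IsGradPathList (W : MorseSeq V) : List (Finset V) → Prop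
  | single (σ : Finset V) : σ ∈ W.cplx → IsGradPathList W [σ]
  | cons (σ τ σ' : Finset V) (rest : List (Finset V)) :
      W.Regular σ τ → σ' ∈ bd τ → σ' ≠ σ → IsGradPathList W (σ' :: rest) →
      IsGradPathList W (σ :: τ :: σ' :: rest)

/-- `IsCogradPathList W l` : the list `l = [τ₀, σ₁, τ₁, …, σ_k, τ_k]` is a cogradient path
in `W`. -/
inductive IsCogradPathList (W : MorseSeq V) : List (Finset V) → Prop
  | single (τ : Finset V) : τ ∈ W.cplx → IsCogradPathList W [τ]
  | cons (τ σ' τ' : Finset V) (rest : List (Finset V)) :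
      W.Regular σ' τ' → τ ∈ cobd W.cplx σ' → τ' ≠ τ → IsCogradPathList W (τ' :: rest) →
      IsCogradPathList W (τ :: σ' :: τ' :: rest)

/-- The set of gradient paths in `W` from `ν` to `κ`. -/
def GradPaths (W : MorseSeq V) (ν κ : Finset V) : Set (List (Finset V)) :=
  {l | IsGradPathList W l ∧ l.head? = some ν ∧ l.getLast? = some κ}

/-- The set of cogradient paths in `W` from `κ` to `ν`. -/
def CogradPaths (W : MorseSeq V) (κ ν : Finset V) : Set (List (Finset V)) :=
  {l | IsCogradPathList W l ∧ l.head? = some κ ∧ l.getLast? = some ν}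

/-- A `∧`-path: a gradient path `⟨σ₀, τ₀, …, σ_k⟩` such that `σ_k ∈ Λ(σ_i)` for every
`i ∈ [0,k]` (the `σ_i` sit at the even positions of the list). -/
def IsRefPath (W : MorseSeq V) (Λ : Finset V → Finset (Finset V))
    (l : List (Finset V)) : Prop :=
  IsGradPathList W l ∧ ∀ κ ∈ l.getLast?, ∀ i, i % 2 = 0 → ∀ σ ∈ l[i]?, κ ∈ Λ σ

/-- A `∨`-path: a cogradient path `⟨τ₀, σ₁, τ₁, …, τ_k⟩` such that `τ₀ ∈ Vee(τ_i)` for every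
`i ∈ [0,k]` (the `τ_i` sit at the even positions of the list). -/
def IsCorefPath (W : MorseSeq V) (Vee : Finset V → Finset (Finset V))
    (l : List (Finset V)) : Prop :=
  IsCogradPathList W l ∧ ∀ κ ∈ l.head?, ∀ i, i % 2 = 0 → ∀ τ ∈ l[i]?, κ ∈ Vee τ

/-! Both parts are proved by induction along the Morse sequence, upward in the order in which
faces are added for `∧` and downward for `∨`. For `∧`: a face `ν` that is not lower regular
starts no gradient path except `⟨ν⟩`. A lower regular `ν` with partner `τ` starts exactly the
paths `⟨ν, τ, σ, …⟩` with `σ ∈ ∂τ \ {ν}`, and these `σ` were added before `ν`; since `∧(∂τ) = 0`,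
`κ ∈ ∧(ν)` holds iff `κ ∈ ∧(σ)` for an odd number of such `σ`, which is the parity recursion of the
path counts. Dually, an upper regular `ν` with partner `σ` ends exactly the cogradient paths
`⟨…, τ, σ, ν⟩` with `τ ∈ δσ \ {ν}`, all added after `ν`, and `∨(δσ) = 0` gives the same
recursion. -/

open Finset
open scoped Function

section Chains

omit [DecidableEq V] in
lemma mem_bd_iff {ρ τ : Finset V} : ρ ∈ bd τ ↔ ρ ⊆ τ ∧ ρ.Nonempty ∧ ρ.card + 1 = τ.card := by
  simp [bd]

lemma mem_cobd_iff {K : Finset (Finset V)} {σ τ : Finset V} :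
    τ ∈ cobd K σ ↔ τ ∈ K ∧ σ ⊆ τ ∧ σ.card + 1 = τ.card := by
  simp [cobd]

omit [DecidableEq V] in
lemma ne_of_mem_bd {ρ τ : Finset V} (h : ρ ∈ bd τ) : ρ ≠ τ := by
  rintro rfl
  simpa using (mem_bd_iff.1 h).2.2

omit [DecidableEq V] in
lemma IsComplex.mem_of_mem_bd {K : Finset (Finset V)} (hK : IsComplex K) {ρ τ : Finset V}
    (hτ : τ ∈ K) (hρ : ρ ∈ bd τ) : ρ ∈ K :=
  (hK τ hτ).2 ρ (mem_bd_iff.1 hρ).1 (mem_bd_iff.1 hρ).2.1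

lemma IsFreePair.card_eq {K : Finset (Finset V)} (hK : IsComplex K) {σ τ : Finset V}
    (h : IsFreePair K σ τ) : τ.card = σ.card + 1 := by
  obtain ⟨hσ, hτ, hστ, hfree⟩ := h
  obtain ⟨x, hxτ, hxσ⟩ := exists_of_ssubset hστ
  have hsub : insert x σ ⊆ τ := insert_subset hxτ hστ.subset
  have : insert x σ = τ :=
    hfree _ ((hK τ hτ).2 _ hsub (insert_nonempty x σ)) (ssubset_insert hxσ)
  rw [← this, card_insert_of_notMem hxσ]

lemma IsFreePair.mem_bd {K : Finset (Finset V)} (hK : IsComplex K) {σ τ : Finset V}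
    (h : IsFreePair K σ τ) : σ ∈ bd τ :=
  mem_bd_iff.2 ⟨h.2.2.1.subset, (hK σ h.1).1, (h.card_eq hK).symm⟩

lemma IsFreePair.notMem_of_mem_cobd {K L : Finset (Finset V)} {σ τ ρ : Finset V}
    (h : IsFreePair K σ τ) (hρ : ρ ∈ cobd L σ) (hne : ρ ≠ τ) : ρ ∉ K := by
  obtain ⟨-, hσρ, hcard⟩ := mem_cobd_iff.1 hρ
  refine fun hρK => hne (h.2.2.2 ρ hρK (Finset.ssubset_iff_subset_ne.2 ⟨hσρ, ?_⟩))
  rintro rfl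
  omega

lemma mem_iff_odd_card_erase_of_chainSum_eq_empty {c : Finset (Finset V)}
    {f : Finset V → Finset (Finset V)} (hc : chainSum c f = ∅) {ν : Finset V} (hν : ν ∈ c)
    (κ : Finset V) : κ ∈ f ν ↔ Odd #{x ∈ c.erase ν | κ ∈ f x} := by
  have heven : Even #{x ∈ c | κ ∈ f x} := by
    by_contra hodd
    obtain ⟨x, hx⟩ := card_pos.1 (Nat.not_even_iff_odd.1 hodd).pos
    have : κ ∈ chainSum c f :=
      mem_filter.2 ⟨mem_biUnion.2 ⟨x, mem_filter.1 hx⟩, Nat.odd_iff.1 (Nat.not_even_iff_odd.1 hodd)⟩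
    simp [hc] at this
  rw [← insert_erase hν, filter_insert] at heven
  split_ifs at heven with h
  · rw [card_insert_of_notMem (by simp)] at heven
    simpa [h, Nat.even_add_one] using heven
  · simpa [h] using heven

/-- Finiteness is carried along because `Set.ncard` is `0` on infinite sets. -/
lemma finite_and_mem_iff_odd_ncard_of_chainSum_eq_empty {α : Type*}
    {c : Finset (Finset V)} {f : Finset V → Finset (Finset V)} (hc : chainSum c f = ∅)
    {ν κ : Finset V} (hν : ν ∈ c) {P : Finset V → Set α} (hP : Pairwise (Disjoint on P))
    {g : α → α} (hg : g.Injective) (hPν : P ν = g '' ⋃ x ∈ c.erase ν, P x)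
    (ih : ∀ x ∈ c.erase ν, (P x).Finite ∧ (κ ∈ f x ↔ Odd (P x).ncard)) :
    (P ν).Finite ∧ (κ ∈ f ν ↔ Odd (P ν).ncard) := by
  rw [hPν, ← set_biUnion_coe]
  refine ⟨((c.erase ν).finite_toSet.biUnion fun x hx => (ih x hx).1).image g, ?_⟩
  rw [Set.ncard_image_of_injective _ hg,
    (c.erase ν).finite_toSet.ncard_biUnion (fun x hx => (ih x hx).1) (hP.set_pairwise _),
    finsum_mem_coe_finset, odd_sum_iff_odd_card_odd,
    mem_iff_odd_card_erase_of_chainSum_eq_empty hc hν, filter_congr fun x hx => (ih x hx).2]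

lemma finite_and_iff_odd_ncard_of_eq_ite {α : Type*} {P : Set α} {p q : Prop} [Decidable p]
    {a : α} (hP : P = if p then {a} else ∅) (hq : q ↔ p) : P.Finite ∧ (q ↔ Odd P.ncard) := by
  split_ifs at hP with h <;> simp [hP, hq, h]

end Chains

namespace MorseSeq

variable (W : MorseSeq V)

lemma seq_mono {i j : ℕ} (hij : i ≤ j) (hj : j ≤ W.k) : W.seq i ⊆ W.seq j := by
  induction j, hij using Nat.le_induction with
  | base => exact Subset.rfl
  | succ j _ ih =>
    refine (ih (by omega)).trans ?_
    rcases W.step (j + 1) (by omega) hj with ⟨_, _, _, h⟩ | ⟨_, _, h⟩ <;>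
    · rw [Nat.add_sub_cancel] at h
      exact h ▸ sdiff_subset

lemma eq_of_mem_seq_sdiff {i j : ℕ} (hi : i ≤ W.k) (hj : j ≤ W.k) {x : Finset V}
    (hxi : x ∈ W.seq i \ W.seq (i - 1)) (hxj : x ∈ W.seq j \ W.seq (j - 1)) : i = j := by
  by_contra hne
  rcases Nat.lt_or_gt_of_ne hne with h | h
  · exact (mem_sdiff.1 hxj).2 (W.seq_mono (by omega) (by omega) (mem_sdiff.1 hxi).1)
  · exact (mem_sdiff.1 hxi).2 (W.seq_mono (by omega) (by omega) (mem_sdiff.1 hxj).1)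

lemma mem_seq_succ_cases {i : ℕ} (hi : i < W.k) {ν : Finset V} (hν : ν ∈ W.seq (i + 1))
    (hν' : ν ∉ W.seq i) :
    W.Critical ν ∨ ∃ σ τ, W.Regular σ τ ∧ IsFreePair (W.seq (i + 1)) σ τ ∧
      W.seq i = W.seq (i + 1) \ {σ, τ} ∧ (ν = σ ∨ ν = τ) := by
  have hνd : ν ∈ W.seq (i + 1) \ W.seq (i + 1 - 1) := by simpa using mem_sdiff.2 ⟨hν, hν'⟩
  rcases W.step (i + 1) (by omega) hi with ⟨σ, τ, hfp, h⟩ | ⟨μ, hμ, h⟩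
  · have hd : W.seq (i + 1) \ W.seq (i + 1 - 1) = {σ, τ} := by
      rw [h, Finset.sdiff_sdiff_eq_self (insert_subset hfp.1 (singleton_subset_iff.2 hfp.2.1))]
    rw [hd] at hνd
    exact .inr ⟨σ, τ, ⟨i + 1, by omega, hi, hfp.2.2.1, hd⟩, hfp, by simpa using h,
      by simpa using hνd⟩
  · have hd : W.seq (i + 1) \ W.seq (i + 1 - 1) = {μ} := by
      rw [h, Finset.sdiff_sdiff_eq_self (singleton_subset_iff.2 hμ.1)]
    rw [hd, mem_singleton] at hνd
    exact .inl ⟨i + 1, by omega, hi, hνd ▸ hd⟩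

variable {W}

lemma Regular.ssubset {σ τ : Finset V} (h : W.Regular σ τ) : σ ⊂ τ :=
  let ⟨_, _, _, hστ, _⟩ := h; hστ

lemma Regular.mem_cplx {σ τ : Finset V} (h : W.Regular σ τ) : τ ∈ W.cplx := by
  obtain ⟨i, -, hi, -, hd⟩ := h
  exact W.seq_mono hi le_rfl (mem_sdiff.1 (hd ▸ mem_insert_of_mem (mem_singleton_self τ))).1

/-- Both pairs were added at the step at which the shared face appeared. -/
lemma Regular.pair_eq {σ τ σ' τ' x : Finset V} (h : W.Regular σ τ) (h' : W.Regular σ' τ')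
    (hx : x ∈ ({σ, τ} : Finset (Finset V))) (hx' : x ∈ ({σ', τ'} : Finset (Finset V))) :
    ({σ, τ} : Finset (Finset V)) = {σ', τ'} := by
  obtain ⟨i, -, hi, -, hd⟩ := h
  obtain ⟨j, -, hj, -, hd'⟩ := h'
  obtain rfl := W.eq_of_mem_seq_sdiff hi hj (hd ▸ hx) (hd' ▸ hx')
  rw [← hd, ← hd']

lemma Regular.upper_unique {σ τ τ' : Finset V} (h : W.Regular σ τ) (h' : W.Regular σ τ') :
    τ = τ' := by
  have hτ : τ ∈ ({σ, τ'} : Finset (Finset V)) :=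
    h.pair_eq (x := σ) h' (by simp) (by simp) ▸ by simp
  simpa [h.ssubset.ne'] using hτ

lemma Regular.lower_unique {σ σ' τ : Finset V} (h : W.Regular σ τ) (h' : W.Regular σ' τ) :
    σ = σ' := by
  have hσ : σ ∈ ({σ', τ} : Finset (Finset V)) :=
    h.pair_eq (x := τ) h' (by simp) (by simp) ▸ by simp
  simpa [h.ssubset.ne] using hσ

lemma LowerRegular.not_upperRegular {ν : Finset V} (hl : W.LowerRegular ν) :
    ¬ W.UpperRegular ν := by
  rintro ⟨σ, hσ⟩
  obtain ⟨τ, hτ⟩ := hl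
  have hpair : ({σ, ν} : Finset (Finset V)) = {ν, τ} :=
    hσ.pair_eq (x := ν) hτ (by simp) (by simp)
  have hστ : σ ⊂ τ := hσ.ssubset.trans hτ.ssubset
  have hσ' : σ ∈ ({ν, τ} : Finset (Finset V)) := hpair ▸ by simp
  rcases mem_insert.1 hσ' with rfl | hσ'
  · exact hσ.ssubset.ne rfl
  · exact hστ.ne (mem_singleton.1 hσ')

lemma Critical.notMem_regular {κ σ τ : Finset V} (hκ : W.Critical κ) (h : W.Regular σ τ) :
    κ ∉ ({σ, τ} : Finset (Finset V)) := by
  intro hκστ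
  obtain ⟨i, -, hi, hd⟩ := hκ
  obtain ⟨j, -, hj, hστ, hd'⟩ := h
  obtain rfl := W.eq_of_mem_seq_sdiff hi hj (by simp [hd]) (hd' ▸ hκστ)
  rw [hd] at hd'
  have hσ : σ = κ := mem_singleton.1 (hd' ▸ by simp)
  have hτ : τ = κ := mem_singleton.1 (hd' ▸ by simp)
  exact hστ.ne (hσ.trans hτ.symm)

lemma Critical.not_lowerRegular {κ : Finset V} (hκ : W.Critical κ) : ¬ W.LowerRegular κ :=
  fun ⟨_, h⟩ => hκ.notMem_regular h (by simp)

lemma Critical.not_upperRegular {κ : Finset V} (hκ : W.Critical κ) : ¬ W.UpperRegular κ :=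
  fun ⟨_, h⟩ => hκ.notMem_regular h (by simp)

end MorseSeq

open MorseSeq

section GradientPaths

variable {W : MorseSeq V}

lemma gradPaths_of_not_lowerRegular {ν κ : Finset V} (hν : ν ∈ W.cplx)
    (h : ¬ W.LowerRegular ν) : GradPaths W ν κ = if ν = κ then {[ν]} else ∅ := by
  ext l
  constructor
  · rintro ⟨hl, hhead, hlast⟩
    cases hl with
    | single σ _ =>
      simp only [List.head?_cons, List.getLast?_singleton, Option.some.injEq] at hhead hlast
      subst hhead hlast
      simp
    | cons σ τ _ _ hreg =>
      simp only [List.head?_cons, Option.some.injEq] at hhead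
      exact absurd ⟨τ, hhead ▸ hreg⟩ h
  · split_ifs with hνκ
    · rintro rfl
      exact ⟨.single ν hν, rfl, by simp [hνκ]⟩
    · simp

lemma gradPaths_eq_image_of_regular {ν τ κ : Finset V} (h : W.Regular ν τ) (hνκ : ν ≠ κ) :
    GradPaths W ν κ = (fun l => ν :: τ :: l) '' ⋃ σ ∈ (bd τ).erase ν, GradPaths W σ κ := by
  ext l
  simp only [Set.mem_image, Set.mem_iUnion, mem_erase, exists_prop]
  constructor
  · rintro ⟨hl, hhead, hlast⟩
    cases hl with
    | single σ _ =>
      simp only [List.head?_cons, List.getLast?_singleton, Option.some.injEq] at hhead hlast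
      exact absurd (hhead.symm.trans hlast) hνκ
    | cons σ τ' σ' rest hreg hbd hne hrest =>
      simp only [List.head?_cons, Option.some.injEq] at hhead
      subst hhead
      obtain rfl := hreg.upper_unique h
      refine ⟨σ' :: rest, ⟨σ', ⟨hne, hbd⟩, hrest, rfl, ?_⟩, rfl⟩
      simpa only [List.getLast?_cons_cons] using hlast
  · rintro ⟨l, ⟨σ, ⟨hne, hbd⟩, hl, hhead, hlast⟩, rfl⟩
    obtain ⟨rest, rfl⟩ : ∃ rest, l = σ :: rest := by
      cases l <;> simp_all
    exact ⟨.cons ν τ σ rest h hbd hne hl, rfl, by simpa only [List.getLast?_cons_cons] using hlast⟩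

lemma pairwise_disjoint_gradPaths (κ : Finset V) :
    Pairwise (Disjoint on fun ν => GradPaths W ν κ) := by
  intro a b hab
  refine Set.disjoint_left.2 fun l ha hb => hab ?_
  exact Option.some_injective _ (ha.2.1.symm.trans hb.2.1)

lemma finite_gradPaths_and_mem_iff {Λ : Finset V → Finset (Finset V)} (hΛ : IsRefMap W Λ)
    {κ : Finset V} (hκ : W.Critical κ) {i : ℕ} (hi : i ≤ W.k) {ν : Finset V}
    (hν : ν ∈ W.seq i) : (GradPaths W ν κ).Finite ∧ (κ ∈ Λ ν ↔ Odd (GradPaths W ν κ).ncard) := by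
  induction i generalizing ν with
  | zero => simp [W.init] at hν
  | succ i ih =>
    by_cases hνi : ν ∈ W.seq i
    · exact ih (by omega) hνi
    have hνK : ν ∈ W.cplx := W.seq_mono hi le_rfl hν
    rcases W.mem_seq_succ_cases hi hν hνi with hc | ⟨σ, τ, hreg, hfp, hseq, rfl | rfl⟩
    · refine finite_and_iff_odd_ncard_of_eq_ite
        (gradPaths_of_not_lowerRegular hνK hc.not_lowerRegular) ?_
      rw [hΛ.2.1 ν hc, mem_singleton, eq_comm]
    · have hνκ : ν ≠ κ := fun h => hκ.not_lowerRegular (h ▸ ⟨τ, hreg⟩)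
      refine finite_and_mem_iff_odd_ncard_of_chainSum_eq_empty (hΛ.2.2 τ ⟨ν, hreg⟩).2
        (hfp.mem_bd (W.cpx _ hi)) (pairwise_disjoint_gradPaths κ)
        (fun _ _ h => by simpa using h) (gradPaths_eq_image_of_regular hreg hνκ)
        fun ρ hρ => ih (by omega) ?_
      have hρ' := mem_of_mem_erase hρ
      rw [hseq, mem_sdiff]
      refine ⟨(W.cpx _ hi).mem_of_mem_bd hfp.2.1 hρ', ?_⟩
      simp [ne_of_mem_erase hρ, ne_of_mem_bd hρ']
    · have hνκ : ν ≠ κ := fun h => hκ.not_upperRegular (h ▸ ⟨σ, hreg⟩)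
      refine finite_and_iff_odd_ncard_of_eq_ite
        (gradPaths_of_not_lowerRegular hνK fun hl => hl.not_upperRegular ⟨σ, hreg⟩) ?_
      simp [(hΛ.2.2 ν ⟨σ, hreg⟩).1, hνκ]

end GradientPaths

section CogradientPaths

variable {W : MorseSeq V}

@[simp]
lemma not_isCogradPathList_pair {τ σ : Finset V} : ¬ IsCogradPathList W [τ, σ] := nofun

@[simp]
lemma isCogradPathList_singleton {τ : Finset V} : IsCogradPathList W [τ] ↔ τ ∈ W.cplx :=
  ⟨fun | .single _ h => h, .single τ⟩

@[simp]
lemma isCogradPathList_cons_cons_cons {τ σ τ' : Finset V} {rest : List (Finset V)} :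
    IsCogradPathList W (τ :: σ :: τ' :: rest) ↔
      W.Regular σ τ' ∧ τ ∈ cobd W.cplx σ ∧ τ' ≠ τ ∧ IsCogradPathList W (τ' :: rest) :=
  ⟨fun | .cons _ _ _ _ h₁ h₂ h₃ h₄ => ⟨h₁, h₂, h₃, h₄⟩,
    fun ⟨h₁, h₂, h₃, h₄⟩ => .cons _ _ _ _ h₁ h₂ h₃ h₄⟩

lemma isCogradPathList_append_pair_iff {σ ν : Finset V} :
    ∀ {l : List (Finset V)} {τ : Finset V}, l.getLast? = some τ →
      (IsCogradPathList W (l ++ [σ, ν]) ↔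
        IsCogradPathList W l ∧ W.Regular σ ν ∧ τ ∈ cobd W.cplx σ ∧ ν ≠ τ)
  | [τ], _, rfl => by
    simp only [List.cons_append, List.nil_append, isCogradPathList_cons_cons_cons,
      isCogradPathList_singleton]
    exact ⟨fun ⟨h₁, h₂, h₃, _⟩ => ⟨(mem_cobd_iff.1 h₂).1, h₁, h₂, h₃⟩,
      fun ⟨_, h₁, h₂, h₃⟩ => ⟨h₁, h₂, h₃, h₁.mem_cplx⟩⟩
  | [_, _], _, _ => by simp
  | τ₀ :: σ₁ :: τ₁ :: rest, τ, h => by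
    rw [List.getLast?_cons_cons, List.getLast?_cons_cons] at h
    simp only [List.cons_append, isCogradPathList_cons_cons_cons]
    rw [← List.cons_append, isCogradPathList_append_pair_iff h]
    tauto

lemma IsCogradPathList.eq_singleton_or_eq_append {l : List (Finset V)}
    (h : IsCogradPathList W l) :
    (∃ τ, l = [τ]) ∨ ∃ l' σ ν, l' ≠ [] ∧ l = l' ++ [σ, ν] := by
  induction h with
  | single τ => exact .inl ⟨τ, rfl⟩
  | cons τ σ τ' rest _ _ _ _ ih =>
    refine .inr ?_
    rcases ih with ⟨_, h⟩ | ⟨l', σ', ν', -, h⟩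
    · obtain ⟨rfl, rfl⟩ := List.cons_eq_cons.1 h
      exact ⟨[τ], σ, τ', by simp, rfl⟩
    · exact ⟨τ :: σ :: l', σ', ν', by simp, by simp [h]⟩

lemma cogradPaths_of_not_upperRegular {κ ν : Finset V} (hν : ν ∈ W.cplx)
    (h : ¬ W.UpperRegular ν) : CogradPaths W κ ν = if κ = ν then {[ν]} else ∅ := by
  ext l
  constructor
  · rintro ⟨hl, hhead, hlast⟩
    rcases hl.eq_singleton_or_eq_append with ⟨τ, rfl⟩ | ⟨l', σ, ν', hl', rfl⟩
    · simp only [List.head?_cons, List.getLast?_singleton, Option.some.injEq] at hhead hlast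
      subst hhead hlast
      simp
    · obtain rfl : ν' = ν := by simpa using hlast
      rw [isCogradPathList_append_pair_iff (List.getLast?_eq_getLast_of_ne_nil hl')] at hl
      exact absurd ⟨σ, hl.2.1⟩ h
  · split_ifs with hκν
    · rintro rfl
      exact ⟨.single ν hν, by simp [hκν], rfl⟩
    · simp

lemma cogradPaths_eq_image_of_regular {κ σ ν : Finset V} (h : W.Regular σ ν) (hκν : κ ≠ ν) :
    CogradPaths W κ ν = (· ++ [σ, ν]) '' ⋃ τ ∈ (cobd W.cplx σ).erase ν, CogradPaths W κ τ := by
  ext l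
  simp only [Set.mem_image, Set.mem_iUnion, mem_erase, exists_prop]
  constructor
  · rintro ⟨hl, hhead, hlast⟩
    rcases hl.eq_singleton_or_eq_append with ⟨τ, rfl⟩ | ⟨l', σ', ν', hl', rfl⟩
    · simp only [List.head?_cons, List.getLast?_singleton, Option.some.injEq] at hhead hlast
      exact absurd (hhead.symm.trans hlast) hκν
    · obtain rfl : ν' = ν := by simpa using hlast
      have hτ := List.getLast?_eq_getLast_of_ne_nil hl'
      obtain ⟨hl'', hreg, hcobd, hne⟩ := (isCogradPathList_append_pair_iff hτ).1 hl
      obtain rfl := hreg.lower_unique h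
      refine ⟨l', ⟨_, ⟨hne.symm, hcobd⟩, hl'', ?_, hτ⟩, rfl⟩
      rwa [List.head?_append_of_ne_nil _ hl'] at hhead
  · rintro ⟨l, ⟨τ, ⟨hne, hcobd⟩, hl, hhead, hlast⟩, rfl⟩
    have hl' : l ≠ [] := by rintro rfl; simp at hhead
    refine ⟨(isCogradPathList_append_pair_iff hlast).2 ⟨hl, h, hcobd, hne.symm⟩, ?_, by simp⟩
    rwa [List.head?_append_of_ne_nil _ hl']

lemma pairwise_disjoint_cogradPaths (κ : Finset V) :
    Pairwise (Disjoint on fun ν => CogradPaths W κ ν) := by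
  intro a b hab
  refine Set.disjoint_left.2 fun l ha hb => hab ?_
  exact Option.some_injective _ (ha.2.2.symm.trans hb.2.2)

lemma finite_cogradPaths_and_mem_iff {Vee : Finset V → Finset (Finset V)}
    (hV : IsCorefMap W Vee) {κ : Finset V} (hκ : W.Critical κ) {i : ℕ} (hi : i ≤ W.k)
    {ν : Finset V} (hν : ν ∈ W.cplx) (hνi : ν ∉ W.seq i) :
    (CogradPaths W κ ν).Finite ∧ (κ ∈ Vee ν ↔ Odd (CogradPaths W κ ν).ncard) := by
  induction hi using Nat.decreasingInduction generalizing ν with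
  | self => exact absurd hν hνi
  | of_succ i hi ih =>
    by_cases hνi' : ν ∈ W.seq (i + 1)
    swap
    · exact ih hν hνi'
    rcases W.mem_seq_succ_cases hi hνi' hνi with hc | ⟨σ, τ, hreg, hfp, -, rfl | rfl⟩
    · refine finite_and_iff_odd_ncard_of_eq_ite
        (cogradPaths_of_not_upperRegular hν hc.not_upperRegular) ?_
      rw [hV.2.1 ν hc, mem_singleton]
    · have hκν : κ ≠ ν := fun h => hκ.not_lowerRegular (h ▸ ⟨τ, hreg⟩)
      refine finite_and_iff_odd_ncard_of_eq_ite
        (cogradPaths_of_not_upperRegular hν (LowerRegular.not_upperRegular ⟨τ, hreg⟩)) ?_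
      simp [(hV.2.2 ν ⟨τ, hreg⟩).1, hκν]
    · have hκν : κ ≠ ν := fun h => hκ.not_upperRegular (h ▸ ⟨σ, hreg⟩)
      refine finite_and_mem_iff_odd_ncard_of_chainSum_eq_empty (hV.2.2 σ ⟨ν, hreg⟩).2
        (mem_cobd_iff.2 ⟨hν, hreg.ssubset.subset, (hfp.card_eq (W.cpx _ hi)).symm⟩)
        (pairwise_disjoint_cogradPaths κ) (List.append_left_injective _)
        (cogradPaths_eq_image_of_regular hreg hκν) fun ρ hρ => ?_
      exact ih (mem_cobd_iff.1 (mem_of_mem_erase hρ)).1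
        (hfp.notMem_of_mem_cobd (mem_of_mem_erase hρ) (ne_of_mem_erase hρ))

end CogradientPaths

/-- `κ ∈ ∧(ν)` iff the number of gradient paths from `ν` to `κ` is odd,
and `κ ∈ ∨(ν)` iff the number of cogradient paths from `κ` to `ν` is odd. -/
theorem reference_iff_odd_gradient_paths (W : MorseSeq V)
    (Λ Vee : Finset V → Finset (Finset V))
    (hΛ : IsRefMap W Λ) (hV : IsCorefMap W Vee)
    (κ ν : Finset V) (hκ : W.Critical κ) (hν : ν ∈ W.cplx) :
    (κ ∈ Λ ν ↔ Odd (GradPaths W ν κ).ncard) ∧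
    (κ ∈ Vee ν ↔ Odd (CogradPaths W κ ν).ncard) :=
  ⟨(finite_gradPaths_and_mem_iff hΛ hκ le_rfl hν).2,
    (finite_cogradPaths_and_mem_iff hV hκ (Nat.zero_le _) hν (by simp [W.init])).2⟩
end

section
/- For every Morse sequence W on a simplicial complex K there exists an arranged Morse sequence V on K such that W and V are equivalent (they have the same gradient vector field). -/
/-! ## Basic notions: simplicial complexes, collapses, expansions, fillings -/

variable {V : Type*} [DecidableEq V]

/-! ## Arranged Morse sequences -/

/-- The set of simplices added at step `i` of `W` (a critical face, or a regular pair). -/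
def MorseSeq.added (W : MorseSeq V) (i : ℕ) : Finset (Finset V) :=
  W.seq i \ W.seq (i - 1)

/-- Step `i` of `W` is a filling step (it adds a single, critical, face). -/
def MorseSeq.stepCrit (W : MorseSeq V) (i : ℕ) : Prop := (W.added i).card = 1

/-- Step `i` of `W` is an expansion step (it adds a regular pair). -/
def MorseSeq.stepReg (W : MorseSeq V) (i : ℕ) : Prop := (W.added i).card = 2

/-- The dimension (shifted by one: the largest cardinality) of the element `κ_i`
added at step `i`: the cardinality of the critical face, or of the upper face `τ` of
the regular pair `(σ,τ)`. -/
def MorseSeq.stepDim (W : MorseSeq V) (i : ℕ) : ℕ := (W.added i).sup Finset.card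

/-- `W` is an arranged Morse sequence: the dimensions of the elements `κ_i` are
nondecreasing, with a strict increase from a critical face to a regular pair. -/
def MorseSeq.Arranged (W : MorseSeq V) : Prop :=
  ∀ i, 1 ≤ i → i + 1 ≤ W.k →
    W.stepDim i ≤ W.stepDim (i + 1) ∧
      (W.stepCrit i → W.stepReg (i + 1) → W.stepDim i < W.stepDim (i + 1))

/-- Two Morse sequences are equivalent if they have the same gradient vector field. -/
def MorseSeq.Equiv (W W' : MorseSeq V) : Prop :=
  ∀ σ τ : Finset V, W.Regular σ τ ↔ W'.Regular σ τ

/-! An elementary expansion or filling adding `B` may be performed before the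
preceding step adding `A` as soon as no face of `A` is a proper face of a face of `B`; both
steps keep their type, so the gradient vector field is unchanged. Sort the steps by twice
their dimension plus one for critical faces: whenever two consecutive steps are out of
order, the codimension-one shape of regular pairs makes the swap legal, so bubble sort
terminates in an arranged Morse sequence. -/

open Finset

section Steps

variable {L M N P X : Finset (Finset V)}

theorem IsFreePair.card_add_one_eq (hM : IsComplex M) {σ τ : Finset V}
    (h : IsFreePair M σ τ) : σ.card + 1 = τ.card := by
  obtain ⟨-, hτ, hστ, hfree⟩ := h
  obtain ⟨x, hxτ, hxσ⟩ := exists_of_ssubset hστ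
  have hsub : insert x σ ⊆ τ := insert_subset hxτ hστ.subset
  have heq : insert x σ = τ :=
    hfree _ ((hM τ hτ).2 _ hsub (insert_nonempty x σ)) (ssubset_insert hxσ)
  rw [← heq, card_insert_of_notMem hxσ]

/-- The faces added by the last step of a Morse sequence ending in `M`. -/
def IsRemovable (M X : Finset (Finset V)) : Prop :=
  (∃ σ τ, IsFreePair M σ τ ∧ X = {σ, τ}) ∨ ∃ ν, IsFacet M ν ∧ X = {ν}

def IsMorseStep (L M : Finset (Finset V)) : Prop :=
  ElemExpansion L M ∨ ElemFilling L M

theorem IsRemovable.subset (h : IsRemovable M X) : X ⊆ M := by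
  rcases h with ⟨σ, τ, hfp, rfl⟩ | ⟨ν, hν, rfl⟩
  · exact insert_subset hfp.1 (singleton_subset_iff.2 hfp.2.1)
  · exact singleton_subset_iff.2 hν.1

theorem IsRemovable.mono (h : IsRemovable N X) (hXP : X ⊆ P) (hPN : P ⊆ N) :
    IsRemovable P X := by
  rcases h with ⟨σ, τ, ⟨-, -, hστ, hfree⟩, rfl⟩ | ⟨ν, ⟨-, hmax⟩, rfl⟩
  · exact Or.inl ⟨σ, τ, ⟨hXP (by simp), hXP (by simp), hστ,
      fun ρ hρ => hfree ρ (hPN hρ)⟩, rfl⟩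
  · exact Or.inr ⟨ν, ⟨hXP (by simp), fun ρ hρ => hmax ρ (hPN hρ)⟩, rfl⟩

theorem IsRemovable.extend (h : IsRemovable M X) (hMN : M ⊆ N)
    (hup : ∀ x ∈ X, ∀ ρ ∈ N, x ⊂ ρ → ρ ∈ M) : IsRemovable N X := by
  rcases h with ⟨σ, τ, ⟨hσ, hτ, hστ, hfree⟩, rfl⟩ | ⟨ν, ⟨hν, hmax⟩, rfl⟩
  · exact Or.inl ⟨σ, τ, ⟨hMN hσ, hMN hτ, hστ,
      fun ρ hρ hσρ => hfree ρ (hup σ (by simp) ρ hρ hσρ) hσρ⟩, rfl⟩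
  · refine Or.inr ⟨ν, ⟨hMN hν, fun ρ hρ hνρ => ?_⟩, rfl⟩
    obtain rfl | hne := eq_or_ne ν ρ
    · rfl
    · exact hmax ρ (hup ν (mem_singleton_self ν) ρ hρ (hνρ.ssubset_of_ne hne)) hνρ

theorem union_sdiff_sdiff_left (hLM : L ⊆ M) : (L ∪ (N \ M)) \ L = N \ M := by
  rw [Finset.union_sdiff_left,
    Finset.sdiff_eq_self_of_disjoint (disjoint_of_subset_right hLM sdiff_disjoint)]

theorem sdiff_union_sdiff_right (hLM : L ⊆ M) (hMN : M ⊆ N) :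
    N \ (L ∪ (N \ M)) = M \ L := by
  ext x
  have := @hLM x
  have := @hMN x
  simp only [mem_sdiff, mem_union]
  tauto

theorem isMorseStep_iff : IsMorseStep L M ↔ L ⊆ M ∧ IsRemovable M (M \ L) := by
  constructor
  · rintro (⟨σ, τ, hfp, rfl⟩ | ⟨ν, hν, rfl⟩)
    · have hX : IsRemovable M {σ, τ} := Or.inl ⟨σ, τ, hfp, rfl⟩
      exact ⟨sdiff_subset, by rwa [Finset.sdiff_sdiff_eq_self hX.subset]⟩
    · have hX : IsRemovable M {ν} := Or.inr ⟨ν, hν, rfl⟩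
      exact ⟨sdiff_subset, by rwa [Finset.sdiff_sdiff_eq_self hX.subset]⟩
  · rintro ⟨hLM, ⟨σ, τ, hfp, hX⟩ | ⟨ν, hν, hX⟩⟩
    · exact Or.inl ⟨σ, τ, hfp, by rw [← hX, Finset.sdiff_sdiff_eq_self hLM]⟩
    · exact Or.inr ⟨ν, hν, by rw [← hX, Finset.sdiff_sdiff_eq_self hLM]⟩

theorem IsMorseStep.swap (hL : IsComplex L) (hN : IsComplex N) (hLM : IsMorseStep L M)
    (hMN : IsMorseStep M N) (hsep : ∀ a ∈ M \ L, ∀ b ∈ N \ M, ¬ a ⊂ b) :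
    IsComplex (L ∪ (N \ M)) ∧ IsMorseStep L (L ∪ (N \ M)) ∧
      IsMorseStep (L ∪ (N \ M)) N := by
  obtain ⟨hLM, hA⟩ := isMorseStep_iff.1 hLM
  obtain ⟨hMN, hB⟩ := isMorseStep_iff.1 hMN
  have hPL : (L ∪ (N \ M)) \ L = N \ M := union_sdiff_sdiff_left hLM
  have hPN : L ∪ (N \ M) ⊆ N := union_subset (hLM.trans hMN) sdiff_subset
  refine ⟨?_, isMorseStep_iff.2 ⟨subset_union_left, ?_⟩, isMorseStep_iff.2 ⟨hPN, ?_⟩⟩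
  · intro τ hτ
    rcases mem_union.1 hτ with hτL | hτB
    · obtain ⟨hτne, hfaces⟩ := hL τ hτL
      exact ⟨hτne, fun σ hστ hσ => mem_union_left _ (hfaces σ hστ hσ)⟩
    obtain ⟨hτN, hτM⟩ := mem_sdiff.1 hτB
    refine ⟨(hN τ hτN).1, fun σ hστ hσ => ?_⟩
    by_cases hσM : σ ∈ M
    · by_contra hσP
      have hσL : σ ∉ L := fun h => hσP (mem_union_left _ h)
      have hne : σ ≠ τ := by rintro rfl; exact hτM hσM
      exact hsep σ (mem_sdiff.2 ⟨hσM, hσL⟩) τ hτB (hστ.ssubset_of_ne hne)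
    · exact mem_union_right _ (mem_sdiff.2 ⟨(hN τ hτN).2 σ hστ hσ, hσM⟩)
  · rw [hPL]
    exact hB.mono subset_union_right hPN
  · rw [sdiff_union_sdiff_right hLM hMN]
    refine hA.extend hMN fun a ha ρ hρN haρ => ?_
    by_contra hρM
    exact hsep a ha ρ (mem_sdiff.2 ⟨hρN, hρM⟩) haρ

end Steps

section CellKey

/-- Within one dimension, regular pairs get the smaller key, as an arranged sequence
performs them before the critical faces. -/
def cellKey (X : Finset (Finset V)) : ℕ :=
  2 * X.sup card + if X.card = 1 then 1 else 0

theorem IsRemovable.cellKey_le {M X : Finset (Finset V)} (hM : IsComplex M)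
    (h : IsRemovable M X) {a : Finset V} (ha : a ∈ X) : cellKey X ≤ 2 * a.card + 2 := by
  rcases h with ⟨σ, τ, hfp, rfl⟩ | ⟨ν, -, rfl⟩
  · have hcard := hfp.card_add_one_eq hM
    have hpair : ({σ, τ} : Finset (Finset V)).card = 2 := card_pair_eq_two_iff.2 hfp.2.2.1.ne
    have hsup : ({σ, τ} : Finset (Finset V)).sup card = τ.card := by
      rw [sup_insert, sup_singleton]
      exact sup_eq_right.2 (by omega)
    rw [cellKey, hsup, hpair, if_neg (by norm_num)]
    rcases mem_insert.1 ha with rfl | ha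
    · omega
    · rw [mem_singleton.1 ha]
      omega
  · rw [mem_singleton.1 ha]
    simp [cellKey]

theorem IsRemovable.not_ssubset_of_cellKey_lt {M X Y : Finset (Finset V)} (hM : IsComplex M)
    (h : IsRemovable M X) (hlt : cellKey Y < cellKey X) {a b : Finset V} (ha : a ∈ X)
    (hb : b ∈ Y) : ¬ a ⊂ b := fun hab => by
  have := card_lt_card hab
  have hkeyX := h.cellKey_le hM ha
  have hb' := le_sup (f := card) hb
  unfold cellKey at hlt hkeyX
  omega

end CellKey

theorem sum_comp_swap_mul_sub_lt {f : ℕ → ℕ} {i k : ℕ} (h1 : 1 ≤ i) (h2 : i + 1 ≤ k)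
    (hf : f (i + 1) < f i) :
    ∑ j ∈ Icc 1 k, f (Equiv.swap i (i + 1) j) * (k - j) < ∑ j ∈ Icc 1 k, f j * (k - j) := by
  have hi : i ∈ Icc 1 k := mem_Icc.2 ⟨h1, by omega⟩
  have hi' : i + 1 ∈ (Icc 1 k).erase i := mem_erase.2 ⟨by omega, mem_Icc.2 ⟨by omega, h2⟩⟩
  rw [← add_sum_erase _ _ hi, ← add_sum_erase _ _ hi', ← add_sum_erase _ _ hi,
    ← add_sum_erase _ _ hi', Equiv.swap_apply_left, Equiv.swap_apply_right]
  have hrest : ∑ j ∈ ((Icc 1 k).erase i).erase (i + 1), f (Equiv.swap i (i + 1) j) * (k - j)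
      = ∑ j ∈ ((Icc 1 k).erase i).erase (i + 1), f j * (k - j) := by
    refine sum_congr rfl fun j hj => ?_
    obtain ⟨hj1, hj, -⟩ := mem_erase.1 hj |>.imp_right mem_erase.1
    rw [Equiv.swap_apply_of_ne_of_ne hj hj1]
  have hw : k - i = (k - (i + 1)) + 1 := by omega
  rw [hrest, hw]
  nlinarith

namespace MorseSeq

variable (W : MorseSeq V)

theorem isMorseStep {i : ℕ} (h1 : 1 ≤ i) (h2 : i ≤ W.k) :
    IsMorseStep (W.seq (i - 1)) (W.seq i) :=
  W.step i h1 h2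

theorem added_succ (i : ℕ) : W.added (i + 1) = W.seq (i + 1) \ W.seq i := by
  simp [added]

def stepKey (i : ℕ) : ℕ := cellKey (W.added i)

theorem arranged_of_stepKey_le
    (h : ∀ i, 1 ≤ i → i + 1 ≤ W.k → W.stepKey i ≤ W.stepKey (i + 1)) : W.Arranged := by
  intro i h1 h2
  have hkey := h i h1 h2
  simp only [stepKey, cellKey] at hkey
  simp only [stepDim, stepCrit, stepReg]
  refine ⟨by split_ifs at hkey <;> omega, fun hcrit hreg => ?_⟩
  rw [if_pos hcrit, if_neg (by omega)] at hkey
  omega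

theorem not_ssubset_of_stepKey_lt {i : ℕ} (h1 : 1 ≤ i) (h2 : i + 1 ≤ W.k)
    (hlt : W.stepKey (i + 1) < W.stepKey i) :
    ∀ a ∈ W.added i, ∀ b ∈ W.added (i + 1), ¬ a ⊂ b := fun _ ha _ hb =>
  (isMorseStep_iff.1 (W.isMorseStep h1 (by omega))).2.not_ssubset_of_cellKey_lt
    (W.cpx i (by omega)) hlt ha hb

theorem isMorseStep_swap {i : ℕ} (h1 : 1 ≤ i) (h2 : i + 1 ≤ W.k)
    (hsep : ∀ a ∈ W.added i, ∀ b ∈ W.added (i + 1), ¬ a ⊂ b) :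
    IsComplex (W.seq (i - 1) ∪ W.added (i + 1)) ∧
      IsMorseStep (W.seq (i - 1)) (W.seq (i - 1) ∪ W.added (i + 1)) ∧
      IsMorseStep (W.seq (i - 1) ∪ W.added (i + 1)) (W.seq (i + 1)) := by
  rw [added_succ] at hsep ⊢
  exact IsMorseStep.swap (W.cpx _ (by omega)) (W.cpx _ h2) (W.isMorseStep h1 (by omega))
    (W.isMorseStep (by omega) h2) hsep

def swapSteps {i : ℕ} (h1 : 1 ≤ i) (h2 : i + 1 ≤ W.k)
    (hsep : ∀ a ∈ W.added i, ∀ b ∈ W.added (i + 1), ¬ a ⊂ b) : MorseSeq V where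
  k := W.k
  seq := Function.update W.seq i (W.seq (i - 1) ∪ W.added (i + 1))
  cpx j hj := by
    obtain rfl | hji := eq_or_ne j i
    · rw [Function.update_self]
      exact (W.isMorseStep_swap h1 h2 hsep).1
    · rw [Function.update_of_ne hji]
      exact W.cpx j hj
  init := by rw [Function.update_of_ne (by omega), W.init]
  step j hj1 hjk := by
    have hswap := W.isMorseStep_swap h1 h2 hsep
    obtain rfl | hji := eq_or_ne j i
    · rw [Function.update_self, Function.update_of_ne (by omega)]
      exact hswap.2.1
    obtain rfl | hji' := eq_or_ne j (i + 1)
    · rw [Nat.add_sub_cancel, Function.update_self, Function.update_of_ne (by omega)]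
      exact hswap.2.2
    rw [Function.update_of_ne hji, Function.update_of_ne (by omega)]
    exact W.step j hj1 hjk

section SwapSteps

variable {i : ℕ} (h1 : 1 ≤ i) (h2 : i + 1 ≤ W.k)
  (hsep : ∀ a ∈ W.added i, ∀ b ∈ W.added (i + 1), ¬ a ⊂ b)

theorem swapSteps_cplx : (W.swapSteps h1 h2 hsep).cplx = W.cplx :=
  Function.update_of_ne (show W.k ≠ i by omega) _ _

theorem swapSteps_added (j : ℕ) :
    (W.swapSteps h1 h2 hsep).added j = W.added (Equiv.swap i (i + 1) j) := by
  have hLM := (isMorseStep_iff.1 (W.isMorseStep h1 (by omega))).1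
  have hMN := (isMorseStep_iff.1 (W.isMorseStep (i := i + 1) (by omega) h2)).1
  simp only [Nat.add_sub_cancel] at hMN
  simp only [added, swapSteps, Nat.add_sub_cancel]
  obtain rfl | hji := eq_or_ne j i
  · rw [Equiv.swap_apply_left, Function.update_self, Function.update_of_ne (by omega)]
    exact union_sdiff_sdiff_left hLM
  obtain rfl | hji' := eq_or_ne j (i + 1)
  · rw [Equiv.swap_apply_right, Nat.add_sub_cancel, Function.update_self,
      Function.update_of_ne (by omega)]
    exact sdiff_union_sdiff_right hLM hMN
  · rw [Equiv.swap_apply_of_ne_of_ne hji hji', Function.update_of_ne hji,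
      Function.update_of_ne (by omega)]

end SwapSteps

theorem equiv_of_added_eq_comp {W' : MorseSeq V} (π : Equiv.Perm ℕ) (hk : W'.k = W.k)
    (hπ : ∀ j, π j ∈ Icc 1 W.k ↔ j ∈ Icc 1 W.k) (h : ∀ j, W'.added j = W.added (π j)) :
    W.Equiv W' := by
  intro σ τ
  constructor
  · rintro ⟨j, hj1, hjk, hστ, hj⟩
    have hmem : π (π.symm j) ∈ Icc 1 W.k := by simpa using mem_Icc.2 ⟨hj1, hjk⟩
    obtain ⟨hj1', hjk'⟩ := mem_Icc.1 ((hπ _).1 hmem)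
    refine ⟨π.symm j, hj1', hk ▸ hjk', hστ, ?_⟩
    rw [← added, h, Equiv.apply_symm_apply]
    exact hj
  · rintro ⟨j, hj1, hjk, hστ, hj⟩
    obtain ⟨hj1', hjk'⟩ := mem_Icc.1 ((hπ j).2 (mem_Icc.2 ⟨hj1, hk ▸ hjk⟩))
    exact ⟨π j, hj1', hjk', hστ, by rw [← added, ← h]; exact hj⟩

theorem equiv_swapSteps {i : ℕ} (h1 : 1 ≤ i) (h2 : i + 1 ≤ W.k)
    (hsep : ∀ a ∈ W.added i, ∀ b ∈ W.added (i + 1), ¬ a ⊂ b) :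
    W.Equiv (W.swapSteps h1 h2 hsep) :=
  W.equiv_of_added_eq_comp _ rfl (fun j => by
    simp only [mem_Icc, Equiv.swap_apply_def]
    split_ifs <;> omega) (W.swapSteps_added h1 h2 hsep)

def sortPotential : ℕ := ∑ j ∈ Icc 1 W.k, W.stepKey j * (W.k - j)

theorem sortPotential_swapSteps_lt {i : ℕ} (h1 : 1 ≤ i) (h2 : i + 1 ≤ W.k)
    (hlt : W.stepKey (i + 1) < W.stepKey i) :
    (W.swapSteps h1 h2 (W.not_ssubset_of_stepKey_lt h1 h2 hlt)).sortPotential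
      < W.sortPotential := by
  simp only [sortPotential, stepKey, swapSteps_added]
  exact sum_comp_swap_mul_sub_lt h1 h2 hlt

end MorseSeq

/-- Every Morse sequence is equivalent (same gradient vector field)
to an arranged Morse sequence on the same complex. -/
theorem exists_equivalent_arranged_morseSeq (W : MorseSeq V) :
    ∃ W' : MorseSeq V, W'.cplx = W.cplx ∧ W'.Arranged ∧ MorseSeq.Equiv W W' := by
  induction hn : W.sortPotential using Nat.strong_induction_on generalizing W with
  | _ n ih =>
  by_cases hsorted : ∀ i, 1 ≤ i → i + 1 ≤ W.k → W.stepKey i ≤ W.stepKey (i + 1)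
  · exact ⟨W, rfl, W.arranged_of_stepKey_le hsorted, fun _ _ => Iff.rfl⟩
  push Not at hsorted
  obtain ⟨i, h1, h2, hlt⟩ := hsorted
  have hsep := W.not_ssubset_of_stepKey_lt h1 h2 hlt
  obtain ⟨W', hcplx, harr, hequiv⟩ :=
    ih _ (hn ▸ W.sortPotential_swapSteps_lt h1 h2 hlt) (W.swapSteps h1 h2 hsep) rfl
  exact ⟨W', hcplx.trans (W.swapSteps_cplx h1 h2 hsep), harr,
    fun σ τ => (W.equiv_swapSteps h1 h2 hsep σ τ).trans (hequiv σ τ)⟩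
end
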